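/- Let R be a Noetherian F-finite commutative ring of characteristic p, let (M,C) be a q-Cartier module over R with M finitely generated, let f ∈ R, and let N ⊆ M be a finitely generated R-submodule such that the pair (N,f) satisfies the boundedness assumption. (1) If N is C-preperiodic (there exist i, j > 0 with C^i(N) = C^{i+j}(N)), then every α ∈ ν_f(q^∞;N) is rational, i.e., α is the image in ℤ_p ⊆ ℚ_p of a rational number under the canonical embedding ℚ → ℚ_p. (2) If moreover N = C^j(N) for some integer j > 0, then every α ∈ ν_f(q^∞;N) is the image of a rational number r with −1 ≤ r ≤ 0. -/

import Mathlib

/-!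
If `C^j N = N`, a level-`m` witness `n` of `α ∈ ν_f(q^∞;N)` lifts to a level-`(m+j)` witness
`n q^j + u` with a digit `u < q^j`; one digit recurs at infinitely many levels, so `q^j α + u` is
again a ν-invariant of infinite level. The boundedness assumption makes `ν_f(q^∞;N)` finite
(distinct `p`-adic integers have distinct residues modulo `q^m` for large `m`), so iterating
`α ↦ q^j α + u` eventually cycles. A point with `x = Q x + d`, `0 ≤ d < Q`, is `-d/(Q-1) ∈ [-1,0]`,
and `[-1,0]` is stable under the inverse steps `x ↦ (x - d)/Q`. In the preperiodic case `C^i N` is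
periodic, and every `α ∈ ν_f(q^∞;N)` is `q^i β + u` with `β ∈ ν_f(q^∞;C^i N)`.
-/

open Pointwise Function

/-- The set of ν-invariants of level `m` of a subset `N` of a `q`-Cartier module `(M, C)`
with respect to `f`: those `n : ℕ` with `C^m(f^n N) ≠ C^m(f^{n+1} N)`. -/
def nuLevel {R M : Type*} [CommRing R] [AddCommGroup M] [Module R M]
    (C : M → M) (f : R) (N : Set M) (m : ℕ) : Set ℕ :=
  {n | C^[m] '' (f ^ n • N) ≠ C^[m] '' (f ^ (n + 1) • N)}

/-- The set of ν-invariants of infinite level. -/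
def nuInfinite {R M : Type*} [CommRing R] [AddCommGroup M] [Module R M]
    (p : ℕ) [Fact p.Prime] (q : ℕ) (C : M → M) (f : R) (N : Set M) : Set ℤ_[p] :=
  {α | ∀ m : ℕ, 1 ≤ m → ∃ n ∈ nuLevel C f N m, ((q : ℤ_[p]) ^ m) ∣ (α - (n : ℤ_[p]))}

open Filter

section Semilinear

variable {R M : Type*} [CommRing R] [AddCommGroup M] [Module R M] {q : ℕ} {C : M → M}
  (hC : ∀ (a : R) (x : M), C (a ^ q • x) = a • C x)
include hC

theorem iterate_pow_pow_smul (a : R) (m : ℕ) (x : M) :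
    C^[m] (a ^ q ^ m • x) = a • C^[m] x := by
  induction m generalizing x with
  | zero => simp
  | succ m ih => rw [iterate_succ_apply, iterate_succ_apply, pow_succ, pow_mul, hC, ih]

theorem image_iterate_pow_pow_smul (a : R) (m : ℕ) (T : Set M) :
    C^[m] '' (a ^ q ^ m • T) = a • C^[m] '' T := by
  simp only [← Set.image_smul, Set.image_image, iterate_pow_pow_smul hC]

theorem image_iterate_pow_smul_image_iterate (f : R) (m i n : ℕ) (S : Set M) :
    C^[m] '' (f ^ n • C^[i] '' S) = C^[m + i] '' (f ^ (n * q ^ i) • S) := by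
  rw [iterate_add, Set.image_comp, pow_mul, image_iterate_pow_pow_smul hC]

end Semilinear

section NuLevel

variable {R M : Type*} [CommRing R] [AddCommGroup M] [Module R M] {q : ℕ} {C : M → M} {f : R}
  {S : Set M}

theorem nuLevel_antitone : Antitone (nuLevel C f S) := by
  refine antitone_nat_of_succ_le fun m n hn heq => hn ?_
  simp only [iterate_succ', Set.image_comp, heq]

theorem image_iterate_pow_smul_antitone (hS : f • S ⊆ S) (m : ℕ) :
    Antitone fun n => C^[m] '' (f ^ n • S) := by
  refine antitone_nat_of_succ_le fun n => Set.image_mono ?_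
  rw [pow_succ, mul_smul]
  exact Set.smul_set_mono hS

variable (hC : ∀ (a : R) (x : M), C (a ^ q • x) = a • C x)
include hC

theorem mem_nuLevel_of_add_mul_pow_mem {m n k : ℕ} (h : n + k * q ^ m ∈ nuLevel C f S m) :
    n ∈ nuLevel C f S m := by
  have shift : ∀ l, C^[m] '' (f ^ (l + k * q ^ m) • S) = f ^ k • C^[m] '' (f ^ l • S) := by
    intro l
    rw [← image_iterate_pow_pow_smul hC, smul_smul, ← pow_mul, ← pow_add, mul_comm, add_comm]
  intro heq
  apply h
  rw [shift, add_right_comm, shift, heq]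

theorem mod_pow_mem_nuLevel {m n : ℕ} (h : n ∈ nuLevel C f S m) :
    n % q ^ m ∈ nuLevel C f S m :=
  mem_nuLevel_of_add_mul_pow_mem hC (k := n / q ^ m) (by rwa [Nat.mod_add_div'])

theorem exists_mul_pow_add_mem_nuLevel {m i n : ℕ} (h : n ∈ nuLevel C f (C^[i] '' S) m) :
    ∃ u < q ^ i, n * q ^ i + u ∈ nuLevel C f S (m + i) := by
  by_contra! hconst
  apply h
  simp only [nuLevel, Set.mem_ofPred_eq, not_not] at hconst
  rw [image_iterate_pow_smul_image_iterate hC, image_iterate_pow_smul_image_iterate hC,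
    add_mul, one_mul]
  suffices ∀ k ≤ q ^ i, C^[m + i] '' (f ^ (n * q ^ i) • S) = C^[m + i] '' (f ^ (n * q ^ i + k) • S)
    from this _ le_rfl
  intro k hk
  induction k with
  | zero => rfl
  | succ k ih => rw [ih (by omega), hconst k (by omega), add_assoc]

theorem mem_nuLevel_image_iterate_of_mul_pow_add_mem (hS : f • S ⊆ S) {m i n u : ℕ}
    (hu : u < q ^ i) (h : n * q ^ i + u ∈ nuLevel C f S (m + i)) :
    n ∈ nuLevel C f (C^[i] '' S) m := by
  intro heq
  rw [image_iterate_pow_smul_image_iterate hC, image_iterate_pow_smul_image_iterate hC] at heq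
  have hanti := image_iterate_pow_smul_antitone (C := C) hS (m + i)
  refine h (le_antisymm ?_ (hanti (Nat.le_succ _)))
  calc C^[m + i] '' (f ^ (n * q ^ i + u) • S) ⊆ C^[m + i] '' (f ^ (n * q ^ i) • S) :=
        hanti (Nat.le_add_right _ _)
    _ = C^[m + i] '' (f ^ ((n + 1) * q ^ i) • S) := heq
    _ ⊆ C^[m + i] '' (f ^ (n * q ^ i + u + 1) • S) := hanti (by rw [add_mul]; omega)

end NuLevel

section Separation

variable {A : Type*} [CommRing A] [IsDomain A] [WfDvdMonoid A] {a : A}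

theorem eventually_not_pow_dvd (ha : ¬IsUnit a) {x : A} (hx : x ≠ 0) :
    ∀ᶠ m in atTop, ¬a ^ m ∣ x := by
  obtain ⟨n, hn⟩ := FiniteMultiplicity.of_not_isUnit ha hx
  exact eventually_atTop.2 ⟨n + 1, fun m hm hdvd => hn ((pow_dvd_pow a hm).trans hdvd)⟩

theorem Finset.eventually_pow_dvd_sub_imp_eq (ha : ¬IsUnit a) (t : Finset A) :
    ∀ᶠ m in atTop, ∀ x ∈ t, ∀ y ∈ t, a ^ m ∣ x - y → x = y := by
  simp only [eventually_all_finset]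
  intro x _ y _
  by_cases hxy : x = y
  · exact Eventually.of_forall fun _ _ => hxy
  · exact (eventually_not_pow_dvd ha (sub_ne_zero.2 hxy)).mono fun _ hm h => absurd h hm

end Separation

section NuInfinite

variable {R M : Type*} [CommRing R] [AddCommGroup M] [Module R M] {p : ℕ} [Fact p.Prime]
  {q : ℕ} {C : M → M} {f : R} {S : Set M} {α : ℤ_[p]}

theorem mem_nuInfinite_of_frequently
    (h : ∃ᶠ m in atTop, ∃ n ∈ nuLevel C f S m, (q : ℤ_[p]) ^ m ∣ α - n) :
    α ∈ nuInfinite p q C f S := by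
  intro m _
  obtain ⟨k, hmk, n, hn, hdvd⟩ := frequently_atTop.1 h m
  exact ⟨n, nuLevel_antitone hmk hn, (pow_dvd_pow _ hmk).trans hdvd⟩

variable (hC : ∀ (a : R) (x : M), C (a ^ q • x) = a • C x)
include hC

theorem exists_lt_pow_mem_nuLevel_dvd (hq : q ≠ 0) (hα : α ∈ nuInfinite p q C f S) {m : ℕ}
    (hm : 1 ≤ m) : ∃ n < q ^ m, n ∈ nuLevel C f S m ∧ (q : ℤ_[p]) ^ m ∣ α - n := by
  obtain ⟨n, hn, hdvd⟩ := hα m hm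
  refine ⟨n % q ^ m, Nat.mod_lt _ (by positivity), mod_pow_mem_nuLevel hC hn, ?_⟩
  have hn : (n : ℤ_[p]) = ↑(n % q ^ m) + (q : ℤ_[p]) ^ m * ↑(n / q ^ m) := by
    exact_mod_cast (Nat.mod_add_div n (q ^ m)).symm
  have : α - ↑(n % q ^ m) = α - n + (q : ℤ_[p]) ^ m * ↑(n / q ^ m) := by
    linear_combination hn
  rw [this]
  exact dvd_add hdvd (dvd_mul_right _ _)

theorem nuInfinite_finite (hpq : p ∣ q) (hq : q ≠ 0) {L : ℕ}
    (hL : ∀ m : ℕ, 1 ≤ m → {n : ℕ | n < q ^ m ∧ n ∈ nuLevel C f S m}.ncard ≤ L) :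
    (nuInfinite p q C f S).Finite := by
  by_contra hinf
  obtain ⟨t, hts, ht⟩ := Set.Infinite.exists_subset_card_eq hinf (L + 1)
  have hq_nonunit : ¬IsUnit (q : ℤ_[p]) := fun hu =>
    PadicInt.irreducible_p.not_isUnit (isUnit_of_dvd_unit (Nat.cast_dvd_cast hpq) hu)
  obtain ⟨m, hm, hsep⟩ :=
    ((eventually_ge_atTop 1).and (t.eventually_pow_dvd_sub_imp_eq hq_nonunit)).exists
  have hres : ∀ α ∈ t, ∃ n < q ^ m, n ∈ nuLevel C f S m ∧ (q : ℤ_[p]) ^ m ∣ α - n :=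
    fun α hα => exists_lt_pow_mem_nuLevel_dvd hC hq (hts hα) hm
  choose! r hr_lt hr_mem hr_dvd using hres
  have hcard := Set.ncard_le_ncard_of_injOn r (t := {n | n < q ^ m ∧ n ∈ nuLevel C f S m})
    (fun α hα => ⟨hr_lt α hα, hr_mem α hα⟩)
    (fun α hα β hβ heq => hsep α hα β hβ (by
      simpa [heq] using dvd_sub (hr_dvd α hα) (hr_dvd β hβ)))
    ((Set.finite_Iio (q ^ m)).subset fun n hn => hn.1)
  rw [Set.ncard_coe_finset, ht] at hcard
  linarith [hL m hm]

theorem exists_pow_mul_add_mem_nuInfinite {i : ℕ}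
    (hα : α ∈ nuInfinite p q C f (C^[i] '' S)) :
    ∃ u < q ^ i, (q : ℤ_[p]) ^ i * α + u ∈ nuInfinite p q C f S := by
  have h : ∃ᶠ m in atTop, ∃ u < q ^ i, ∃ n ∈ nuLevel C f S (m + i),
      (q : ℤ_[p]) ^ (m + i) ∣ (q : ℤ_[p]) ^ i * α + u - n := by
    refine (eventually_ge_atTop 1).frequently.mono fun m hm => ?_
    obtain ⟨n, hn, hdvd⟩ := hα m hm
    obtain ⟨u, hu, hnu⟩ := exists_mul_pow_add_mem_nuLevel hC hn
    refine ⟨u, hu, _, hnu, ?_⟩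
    have : (q : ℤ_[p]) ^ i * α + u - ↑(n * q ^ i + u) = (q : ℤ_[p]) ^ i * (α - n) := by
      push_cast; ring
    rw [this, pow_add, mul_comm]
    exact mul_dvd_mul_left _ hdvd
  obtain ⟨u, hu, hfreq⟩ := (Set.finite_Iio _).frequently_exists.1 h
  exact ⟨u, hu, mem_nuInfinite_of_frequently ((tendsto_add_atTop_nat i).frequently hfreq)⟩

theorem exists_eq_pow_mul_add_of_mem_nuInfinite (hS : f • S ⊆ S) (hq : q ≠ 0) (i : ℕ)
    (hα : α ∈ nuInfinite p q C f S) :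
    ∃ β ∈ nuInfinite p q C f (C^[i] '' S), ∃ u : ℕ, α = (q : ℤ_[p]) ^ i * β + u := by
  have hqi : 0 < q ^ i := by positivity
  have h : ∃ᶠ m in atTop, ∃ u < q ^ i, ∃ n ∈ nuLevel C f (C^[i] '' S) m,
      (q : ℤ_[p]) ^ (m + i) ∣ α - ((q : ℤ_[p]) ^ i * n + u) := by
    refine (eventually_ge_atTop 1).frequently.mono fun m hm => ?_
    obtain ⟨n, hn, hdvd⟩ := hα (m + i) (by omega)
    refine ⟨n % q ^ i, Nat.mod_lt _ hqi, n / q ^ i,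
      mem_nuLevel_image_iterate_of_mul_pow_add_mem hC hS (Nat.mod_lt _ hqi)
        (by rwa [Nat.div_add_mod']), ?_⟩
    have hn : (q : ℤ_[p]) ^ i * ↑(n / q ^ i) + ↑(n % q ^ i) = n := by
      exact_mod_cast Nat.div_add_mod n (q ^ i)
    rwa [hn]
  obtain ⟨u, -, hfreq⟩ := (Set.finite_Iio _).frequently_exists.1 h
  obtain ⟨m, n, -, hdvd⟩ := hfreq.exists
  obtain ⟨β, hβ⟩ : (q : ℤ_[p]) ^ i ∣ α - u := by
    have := dvd_add ((pow_dvd_pow _ (Nat.le_add_left i m)).trans hdvd) (dvd_mul_right _ (n : ℤ_[p]))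
    rwa [sub_add_eq_sub_sub_swap, sub_add_cancel] at this
  refine ⟨β, mem_nuInfinite_of_frequently (hfreq.mono fun m ⟨n, hn, hdvd⟩ => ⟨n, hn, ?_⟩),
    u, by linear_combination hβ⟩
  have : α - ((q : ℤ_[p]) ^ i * n + u) = (q : ℤ_[p]) ^ i * (β - n) := by
    linear_combination hβ
  rw [this, pow_add, mul_comm] at hdvd
  exact (mul_dvd_mul_iff_left (pow_ne_zero _ (Nat.cast_ne_zero.2 hq))).1 hdvd

end NuInfinite

section DigitStep

variable {K : Type*}

def DigitStep [Semiring K] (Q : ℕ) (x y : K) : Prop :=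
  ∃ d < Q, y = Q * x + d

namespace DigitStep

theorem trans [CommSemiring K] {Q Q' : ℕ} {x y z : K} (h : DigitStep Q x y)
    (h' : DigitStep Q' y z) : DigitStep (Q' * Q) x z := by
  obtain ⟨d, hd, rfl⟩ := h
  obtain ⟨d', hd', rfl⟩ := h'
  refine ⟨Q' * d + d', ?_, by push_cast; ring⟩
  calc Q' * d + d' < Q' * (d + 1) := by rw [mul_add_one]; omega
    _ ≤ Q' * Q := Nat.mul_le_mul_left _ hd

theorem pow_of_forall_succ [CommSemiring K] {Q : ℕ} {s : ℕ → K}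
    (h : ∀ k, DigitStep Q (s k) (s (k + 1))) (a t : ℕ) :
    DigitStep (Q ^ t) (s a) (s (a + t)) := by
  induction t with
  | zero => exact ⟨0, one_pos, by simp⟩
  | succ t ih => rw [pow_succ']; exact ih.trans (h _)

variable [Field K] [CharZero K]

theorem mem_ratCast_Icc_of_self {Q : ℕ} (hQ : 1 < Q) {x : K} (h : DigitStep Q x x) :
    x ∈ ((↑) : ℚ → K) '' Set.Icc (-1) 0 := by
  obtain ⟨d, hd, hx⟩ := h
  have hQ₁ : (0 : ℚ) < Q - 1 := sub_pos.2 (by exact_mod_cast hQ)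
  refine ⟨-(d / (Q - 1)), ⟨?_, ?_⟩, ?_⟩
  · rw [neg_le_neg_iff, div_le_one hQ₁, le_sub_iff_add_le]
    exact_mod_cast hd
  · exact neg_nonpos.2 (by positivity)
  · have hQK : (Q : K) - 1 ≠ 0 := sub_ne_zero.2 (by exact_mod_cast hQ.ne')
    push_cast
    rw [neg_div', div_eq_iff hQK]
    linear_combination hx

theorem mem_ratCast_Icc_of_mem {Q : ℕ} (hQ : 0 < Q) {x y : K} (h : DigitStep Q x y)
    (hy : y ∈ ((↑) : ℚ → K) '' Set.Icc (-1) 0) : x ∈ ((↑) : ℚ → K) '' Set.Icc (-1) 0 := by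
  obtain ⟨d, hd, rfl⟩ := h
  obtain ⟨r, ⟨hr₁, hr₂⟩, hr⟩ := hy
  have hQ' : (0 : ℚ) < Q := by exact_mod_cast hQ
  refine ⟨(r - d) / Q, ⟨?_, ?_⟩, ?_⟩
  · rw [le_div_iff₀ hQ']
    have : (d : ℚ) + 1 ≤ Q := by exact_mod_cast hd
    linarith
  · exact div_nonpos_of_nonpos_of_nonneg (by linarith [d.cast_nonneg (α := ℚ)]) hQ'.le
  · push_cast
    rw [hr, add_sub_cancel_right, mul_div_cancel_left₀ _ (Nat.cast_ne_zero.2 hQ.ne')]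

end DigitStep

theorem Set.Finite.mem_ratCast_Icc_of_forall_digitStep [Field K] [CharZero K] {Q : ℕ}
    (hQ : 1 < Q) {V : Set K} (hV : V.Finite) (hstep : ∀ x ∈ V, ∃ y ∈ V, DigitStep Q x y)
    {x : K} (hx : x ∈ V) : x ∈ ((↑) : ℚ → K) '' Set.Icc (-1) 0 := by
  choose! g hgV hg using hstep
  have hsV : ∀ k, g^[k] x ∈ V := fun k => Set.MapsTo.iterate hgV k hx
  have hs : ∀ k, DigitStep Q (g^[k] x) (g^[k + 1] x) := fun k => by
    rw [iterate_succ_apply']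
    exact hg _ (hsV k)
  have := hV.to_subtype
  obtain ⟨a, b, hab, heq⟩ := Finite.exists_ne_map_eq_of_infinite fun k => (⟨g^[k] x, hsV k⟩ : V)
  rw [Subtype.mk.injEq] at heq
  wlog hlt : a < b generalizing a b
  · exact this b a hab.symm heq.symm (by omega)
  have hcycle := DigitStep.pow_of_forall_succ hs a (b - a)
  rw [Nat.add_sub_cancel' hlt.le, ← heq] at hcycle
  have hpre := DigitStep.pow_of_forall_succ hs 0 a
  rw [zero_add, iterate_zero_apply] at hpre
  exact hpre.mem_ratCast_Icc_of_mem (by positivity)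
    (hcycle.mem_ratCast_Icc_of_self (Nat.one_lt_pow (by omega) hQ))

end DigitStep

section Rationality

variable {R M : Type*} [CommRing R] [AddCommGroup M] [Module R M] {p : ℕ} [Fact p.Prime]
  {q : ℕ} {C : M → M} {f : R} {S : Set M}
  (hC : ∀ (a : R) (x : M), C (a ^ q • x) = a • C x)
include hC

theorem nuInfinite_image_iterate_finite (hq : q ≠ 0) (i : ℕ)
    (hfin : (nuInfinite p q C f S).Finite) : (nuInfinite p q C f (C^[i] '' S)).Finite := by
  refine ((Set.finite_Iio (q ^ i)).biUnion fun u _ =>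
    hfin.preimage (f := fun β => (q : ℤ_[p]) ^ i * β + u) ?_).subset ?_
  · exact fun β _ γ _ h =>
      mul_left_cancel₀ (pow_ne_zero _ (Nat.cast_ne_zero.2 hq)) (add_right_cancel h)
  · intro β hβ
    obtain ⟨u, hu, hmem⟩ := exists_pow_mul_add_mem_nuInfinite hC hβ
    exact Set.mem_biUnion hu hmem

theorem coe_mem_ratCast_Icc_of_mem_nuInfinite (hq : 1 < q) {j : ℕ} (hj : 0 < j)
    (hper : C^[j] '' S = S) (hfin : (nuInfinite p q C f S).Finite) {α : ℤ_[p]}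
    (hα : α ∈ nuInfinite p q C f S) : (α : ℚ_[p]) ∈ ((↑) : ℚ → ℚ_[p]) '' Set.Icc (-1) 0 := by
  refine (hfin.image ((↑) : ℤ_[p] → ℚ_[p])).mem_ratCast_Icc_of_forall_digitStep
    (Nat.one_lt_pow hj.ne' hq) ?_ (Set.mem_image_of_mem _ hα)
  rintro _ ⟨β : ℤ_[p], hβ, rfl⟩
  rw [← hper] at hβ
  obtain ⟨u, hu, hmem⟩ := exists_pow_mul_add_mem_nuInfinite hC hβ
  refine ⟨_, Set.mem_image_of_mem _ hmem, u, hu, ?_⟩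
  push_cast
  ring

end Rationality

theorem stmt6_general {R M : Type*} [CommRing R] [AddCommGroup M] [Module R M]
    (p : ℕ) [Fact p.Prime]
    (e q : ℕ) (he : 1 ≤ e) (hq : q = p ^ e)
    (C : M → M)
    (hCsl : ∀ (a : R) (x : M), C (a ^ q • x) = a • C x)
    (f : R) (N : Submodule R M)
    (hbound : ∃ L : ℕ, ∀ m : ℕ, 1 ≤ m →
      {n : ℕ | n < q ^ m ∧ n ∈ nuLevel C f (N : Set M) m}.ncard ≤ L) :
    -- (1) if `N` is `C`-preperiodic, then every ν-invariant of infinite level is rational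
    ((∃ i j : ℕ, 0 < i ∧ 0 < j ∧ C^[i] '' (N : Set M) = C^[i + j] '' (N : Set M)) →
      ∀ α ∈ nuInfinite p q C f (N : Set M), ∃ r : ℚ, (α : ℚ_[p]) = (r : ℚ_[p])) ∧
    -- (2) if moreover `N = C^j(N)` for some `j > 0`, the rational lies in `[-1, 0]`
    (∀ j : ℕ, 0 < j → C^[j] '' (N : Set M) = (N : Set M) →
      ∀ α ∈ nuInfinite p q C f (N : Set M),
        ∃ r : ℚ, -1 ≤ r ∧ r ≤ 0 ∧ (α : ℚ_[p]) = (r : ℚ_[p])) := by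
  obtain ⟨L, hL⟩ := hbound
  have hq₁ : 1 < q := hq ▸ Nat.one_lt_pow (by omega) (Fact.out : p.Prime).one_lt
  have hfin := nuInfinite_finite hCsl (hq ▸ dvd_pow_self p (by omega)) (by omega) hL
  refine ⟨?_, fun j hj hper α hα => ?_⟩
  · rintro ⟨i, j, -, hj, hij⟩ α hα
    have hper : C^[j] '' (C^[i] '' (N : Set M)) = C^[i] '' N := by
      rw [← Set.image_comp, ← iterate_add, add_comm, hij]
    obtain ⟨β, hβ, u, rfl⟩ := exists_eq_pow_mul_add_of_mem_nuInfinite hCsl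
      (Set.smul_set_subset_iff.2 fun x hx => N.smul_mem f hx) (by omega) i hα
    obtain ⟨r, -, hr⟩ := coe_mem_ratCast_Icc_of_mem_nuInfinite hCsl hq₁ hj hper
      (nuInfinite_image_iterate_finite hCsl (by omega) i hfin) hβ
    exact ⟨q ^ i * r + u, by push_cast [hr]; ring⟩
  · obtain ⟨r, ⟨hr₁, hr₂⟩, hr⟩ := coe_mem_ratCast_Icc_of_mem_nuInfinite hCsl hq₁ hj hper hfin hα
    exact ⟨r, hr₁, hr₂, hr.symm⟩

theorem stmt6 {R M : Type*} [CommRing R] [AddCommGroup M] [Module R M]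
    (p : ℕ) [Fact p.Prime] [CharP R p] [IsNoetherianRing R]
    (hFF : (frobenius R p).Finite)
    (e q : ℕ) (he : 1 ≤ e) (hq : q = p ^ e)
    (C : M → M) (hCadd : ∀ x y : M, C (x + y) = C x + C y)
    (hCsl : ∀ (a : R) (x : M), C (a ^ q • x) = a • C x)
    [Module.Finite R M] (f : R) (N : Submodule R M) (hNfg : N.FG)
    (hbound : ∃ L : ℕ, ∀ m : ℕ, 1 ≤ m →
      {n : ℕ | n < q ^ m ∧ n ∈ nuLevel C f (N : Set M) m}.ncard ≤ L) :
    -- (1) if `N` is `C`-preperiodic, then every ν-invariant of infinite level is rational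
    ((∃ i j : ℕ, 0 < i ∧ 0 < j ∧ C^[i] '' (N : Set M) = C^[i + j] '' (N : Set M)) →
      ∀ α ∈ nuInfinite p q C f (N : Set M), ∃ r : ℚ, (α : ℚ_[p]) = (r : ℚ_[p])) ∧
    -- (2) if moreover `N = C^j(N)` for some `j > 0`, the rational lies in `[-1, 0]`
    (∀ j : ℕ, 0 < j → C^[j] '' (N : Set M) = (N : Set M) →
      ∀ α ∈ nuInfinite p q C f (N : Set M),
        ∃ r : ℚ, -1 ≤ r ∧ r ≤ 0 ∧ (α : ℚ_[p]) = (r : ℚ_[p])) :=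
  stmt6_general p e q he hq C hCsl f N hbound
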